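/- Let A be a residuated binar whose underlying lattice is distributive. If A satisfies the identities x\(y ∨ z) = (x\y) ∨ (x\z) and x/(y ∧ z) = (x/y) ∨ (x/z), then A satisfies the identity (x ∨ y)/z = (x/z) ∨ (y/z). -/

import Mathlib

/-!
Put `w = (x ∨ y)/z`, `u = w\x` and `v = w\y`. By `x\(y ∨ z) = x\y ∨ x\z` we get `z ≤ w\(x ∨ y) = u ∨ v`,
and since `w(u ∧ v) ≤ x ∧ y`, the identity `x/(y ∧ z) = x/y ∨ x/z` gives `w ≤ (x ∧ y)/u ∨ (x ∧ y)/v`.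
Distributing `w` over this join, and using `w ≤ x/u`, `w ≤ y/v`, yields
`w ≤ (y/u ∧ y/v) ∨ (x/u ∧ x/v) = y/(u ∨ v) ∨ x/(u ∨ v) ≤ y/z ∨ x/z`.
The reverse inequality holds in every residuated binar.
-/

def IsResiduated {A : Type*} [Lattice A] (mul under ovr : A → A → A) : Prop :=
  ∀ x y z : A, (mul x y ≤ z ↔ y ≤ under x z) ∧ (mul x y ≤ z ↔ x ≤ ovr z y)

namespace IsResiduated

variable {A : Type*} [Lattice A] {mul under ovr : A → A → A}
  (h : IsResiduated mul under ovr) {x x' y z : A}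
include h

theorem le_under_iff : y ≤ under x z ↔ mul x y ≤ z := (h x y z).1.symm

theorem le_ovr_iff : x ≤ ovr z y ↔ mul x y ≤ z := (h x y z).2.symm

theorem ovr_mono_left (hx : x ≤ x') : ovr x y ≤ ovr x' y :=
  h.le_ovr_iff.2 ((h.le_ovr_iff.1 le_rfl).trans hx)

theorem ovr_anti_right (hy : y ≤ z) : ovr x z ≤ ovr x y :=
  h.le_ovr_iff.2 (h.le_under_iff.1 (hy.trans (h.le_under_iff.2 (h.le_ovr_iff.1 le_rfl))))

theorem ovr_sup_right : ovr x (y ⊔ z) = ovr x y ⊓ ovr x z :=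
  le_antisymm (le_inf (h.ovr_anti_right le_sup_left) (h.ovr_anti_right le_sup_right)) <| by
    rw [h.le_ovr_iff, ← h.le_under_iff, sup_le_iff, h.le_under_iff, h.le_under_iff,
      ← h.le_ovr_iff, ← h.le_ovr_iff]
    exact ⟨inf_le_left, inf_le_right⟩

theorem ovr_sup_ovr_le : ovr x z ⊔ ovr y z ≤ ovr (x ⊔ y) z :=
  sup_le (h.ovr_mono_left le_sup_left) (h.ovr_mono_left le_sup_right)

end IsResiduated

/-- In a residuated binar with distributive lattice reduct,
identities (3) and (6) imply identity (4). -/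
theorem stmt_1 {A : Type*} [Lattice A]
    (mul under ovr : A → A → A)
    (hres : ∀ x y z : A, (mul x y ≤ z ↔ y ≤ under x z) ∧ (mul x y ≤ z ↔ x ≤ ovr z y))
    (hdist : ∀ x y z : A, x ⊓ (y ⊔ z) = (x ⊓ y) ⊔ (x ⊓ z))
    (h1 : ∀ x y z : A, under x (y ⊔ z) = under x y ⊔ under x z)
    (h2 : ∀ x y z : A, ovr x (y ⊓ z) = ovr x y ⊔ ovr x z) :
    ∀ x y z : A, ovr (x ⊔ y) z = ovr x z ⊔ ovr y z := by
  have hres : IsResiduated mul under ovr := hres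
  intro x y z
  refine le_antisymm ?_ hres.ovr_sup_ovr_le
  set w := ovr (x ⊔ y) z
  set u := under w x
  set v := under w y
  have hwu : w ≤ ovr x u := hres.le_ovr_iff.2 (hres.le_under_iff.1 le_rfl)
  have hwv : w ≤ ovr y v := hres.le_ovr_iff.2 (hres.le_under_iff.1 le_rfl)
  have hz : z ≤ u ⊔ v := (hres.le_under_iff.2 (hres.le_ovr_iff.1 le_rfl)).trans_eq (h1 w x y)
  have hw : w ≤ ovr (x ⊓ y) u ⊔ ovr (x ⊓ y) v := by
    rw [← h2, hres.le_ovr_iff]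
    exact le_inf (hres.le_under_iff.1 inf_le_left) (hres.le_under_iff.1 inf_le_right)
  calc w = w ⊓ ovr (x ⊓ y) u ⊔ w ⊓ ovr (x ⊓ y) v := by rw [← hdist, inf_eq_left.2 hw]
    _ ≤ ovr y (u ⊔ v) ⊔ ovr x (u ⊔ v) := by
      rw [hres.ovr_sup_right, hres.ovr_sup_right]
      exact sup_le_sup
        (le_inf (inf_le_right.trans (hres.ovr_mono_left inf_le_right)) (inf_le_left.trans hwv))
        (le_inf (inf_le_left.trans hwu) (inf_le_right.trans (hres.ovr_mono_left inf_le_left)))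
    _ ≤ ovr y z ⊔ ovr x z := sup_le_sup (hres.ovr_anti_right hz) (hres.ovr_anti_right hz)
    _ = ovr x z ⊔ ovr y z := sup_comm _ _
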